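/- arXiv:1607.07818 — 2 statements merged into one kernel-verified Lean document; each statement's English description precedes it below -/
import Mathlib

section
/- Let G = (V, E) be a directed graph with positive edge weights in which all pairwise shortest-path distances d(·, v) to a fixed vertex v from distinct vertices are distinct. If u is the i-th nearest neighbor of v (i.e., exactly i - 1 vertices c satisfy d(c, v) < d(u, v)), then for every vertex w on a shortest path π from u to v, the vertex u is among the first i nearest neighbors of w; that is, at most i - 1 vertices c satisfy d(c, w) < d(u, w). -/
open ENNReal

/-- Total weight of the walk starting at `a` and following the vertex list `l`. -/
noncomputable def listCost {V : Type*} (w : V → V → ℝ≥0∞) : V → List V → ℝ≥0∞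
  | _, [] => 0
  | a, b :: l => w a b + listCost w b l

/-- Shortest-path distance from `u` to `v` in the weighted digraph with
weight function `w` (weight `⊤` means no edge). -/
noncomputable def spDist {V : Type*} (w : V → V → ℝ≥0∞) (u v : V) : ℝ≥0∞ :=
  ⨅ l : {l : List V // (u :: l).getLast (List.cons_ne_nil u l) = v},
    listCost w u l.1

/-!
If `c` is strictly closer to `x` than `u` is, and `x` lies on a shortest `u`–`v` path, then
`d(c, v) ≤ d(c, x) + d(x, v) < d(u, x) + d(x, v) = d(u, v)`, so `c` is also strictly closer to `v`
than `u` is. The only subtlety is `d(x, v) = ⊤`, where the strict inequality is lost; but then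
`d(u, v) = ⊤ = d(x, v)`, so `u = x` by injectivity of `d(·, v)` and nothing is closer to `x` than
`x` itself.
-/

theorem List.getLast_cons_append' {α : Type*} (a : α) (l₁ l₂ : List α) :
    (a :: (l₁ ++ l₂)).getLast (List.cons_ne_nil _ _) =
      ((a :: l₁).getLast (List.cons_ne_nil a l₁) :: l₂).getLast (List.cons_ne_nil _ _) := by
  cases l₂ with
  | nil => simp
  | cons b l => simp [List.getLast_append_of_ne_nil]

section ShortestPaths

variable {V : Type*} (w : V → V → ℝ≥0∞)

theorem listCost_append (a : V) (l₁ l₂ : List V) :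
    listCost w a (l₁ ++ l₂) =
      listCost w a l₁ + listCost w ((a :: l₁).getLast (List.cons_ne_nil a l₁)) l₂ := by
  induction l₁ generalizing a with
  | nil => simp [listCost]
  | cons b l ih => simp only [List.cons_append, listCost, ih, List.getLast_cons_cons, add_assoc]

theorem spDist_le_listCost {u v : V} (l : List V)
    (hl : (u :: l).getLast (List.cons_ne_nil u l) = v) : spDist w u v ≤ listCost w u l :=
  iInf_le (fun l : {l : List V // (u :: l).getLast (List.cons_ne_nil u l) = v} =>
    listCost w u l.1) ⟨l, hl⟩

@[simp]
theorem spDist_self (a : V) : spDist w a a = 0 :=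
  nonpos_iff_eq_zero.mp (spDist_le_listCost w [] rfl)

theorem spDist_triangle (a b c : V) : spDist w a c ≤ spDist w a b + spDist w b c := by
  simp only [spDist, ENNReal.iInf_add, ENNReal.add_iInf]
  refine le_iInf₂ fun ⟨m, hm⟩ ⟨l, hl⟩ => ?_
  subst hl
  rw [← listCost_append]
  exact spDist_le_listCost w _ (by rw [List.getLast_cons_append', hm])

theorem spDist_lt_of_lt_of_add_eq {u x v c : V} (hx : spDist w u x + spDist w x v = spDist w u v)
    (hxv : spDist w x v ≠ ⊤) (hc : spDist w c x < spDist w u x) : spDist w c v < spDist w u v :=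
  calc spDist w c v ≤ spDist w c x + spDist w x v := spDist_triangle w c x v
    _ < spDist w u x + spDist w x v := ENNReal.add_lt_add_right hxv hc
    _ = spDist w u v := hx

end ShortestPaths

theorem stmt_4_general {V : Type*} [Fintype V]
    (w : V → V → ℝ≥0∞)
    (v : V) (hdist : Function.Injective fun x => spDist w x v)
    (u : V) (i : ℕ)
    (hu : (Finset.univ.filter fun c => spDist w c v < spDist w u v).card = i - 1) :
    ∀ x : V, spDist w u x + spDist w x v = spDist w u v →
      (Finset.univ.filter fun c => spDist w c x < spDist w u x).card ≤ i - 1 := by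
  intro x hx
  by_cases hxv : spDist w x v = ⊤
  · obtain rfl : u = x := hdist (by simp only [← hx, hxv, add_top])
    simp
  · rw [← hu]
    exact Finset.card_le_card fun c hc => by
      simpa using spDist_lt_of_lt_of_add_eq w hx hxv (by simpa using hc)

theorem stmt_4 {V : Type*} [Fintype V] [DecidableEq V]
    (w : V → V → ℝ≥0∞) (hpos : ∀ a b, 0 < w a b)
    (v : V) (hdist : Function.Injective fun x => spDist w x v)
    (u : V) (i : ℕ) (hi : 1 ≤ i)
    (hu : (Finset.univ.filter fun c => spDist w c v < spDist w u v).card = i - 1) :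
    ∀ x : V, spDist w u x + spDist w x v = spDist w u v →
      (Finset.univ.filter fun c => spDist w c x < spDist w u x).card ≤ i - 1 :=
  stmt_4_general w v hdist u i hu
end

section
/- In a positively weighted directed graph G, if all shortest-path distances into v are distinct and u is the i-th nearest neighbor of v (i ≥ 1, u ≠ v), then there exists a vertex w with an edge (w, v) ∈ E such that d(u, v) = d(u, w) + weight(w, v) and u is among the first i nearest neighbors of w. -/
open ENNReal

/-! A shortest `u`-`v` walk with `u ≠ v` ends in an edge `(x, v)`, so `d(u, v) = d(u, x) + w(x, v)`
for some `x` (Bellman's equation, the minimum over the finitely many `x` being attained). If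
`d(c, x) < d(u, x)`, the triangle inequality through `x` and the finiteness of `w(x, v)` give
`d(c, v) < d(u, v)`; so the vertices closer to `x` than `u` are among the `i - 1` vertices
closer to `v` than `u`. -/

namespace SpDist

variable {V : Type*} (w : V → V → ℝ≥0∞)

lemma listCost_append_singleton (b : V) :
    ∀ (l : List V) (a : V),
      listCost w a (l ++ [b]) = listCost w a l + w ((a :: l).getLast (List.cons_ne_nil a l)) b
  | [], a => by simp [listCost]
  | c :: l, a => by
    show w a c + listCost w c (l ++ [b]) = w a c + listCost w c l + _
    rw [listCost_append_singleton b l c, ← add_assoc, List.getLast_cons (List.cons_ne_nil c l)]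

lemma spDist_le_listCost {u v : V} (l : List V)
    (hl : (u :: l).getLast (List.cons_ne_nil u l) = v) :
    spDist w u v ≤ listCost w u l :=
  iInf_le (fun l : {l : List V // (u :: l).getLast (List.cons_ne_nil u l) = v} =>
    listCost w u l.1) ⟨l, hl⟩

lemma spDist_le_add (u x v : V) : spDist w u v ≤ spDist w u x + w x v := by
  conv_rhs => rw [spDist, ENNReal.iInf_add]
  refine le_iInf fun ⟨l, hl⟩ => ?_
  calc spDist w u v ≤ listCost w u (l ++ [v]) := spDist_le_listCost w _ (by simp)
    _ = listCost w u l + w x v := by rw [listCost_append_singleton, hl]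

lemma iInf_add_le_spDist {u v : V} (huv : u ≠ v) :
    ⨅ x, spDist w u x + w x v ≤ spDist w u v := by
  refine le_iInf fun ⟨l, hl⟩ => ?_
  obtain rfl | ⟨l, b, rfl⟩ := List.eq_nil_or_concat l
  · exact absurd hl huv
  obtain rfl : b = v := by simpa [List.getLast_append] using hl
  set x := (u :: l).getLast (List.cons_ne_nil u l)
  calc ⨅ y, spDist w u y + w y b ≤ spDist w u x + w x b := iInf_le _ x
    _ ≤ listCost w u l + w x b := by gcongr; exact spDist_le_listCost w l rfl
    _ = listCost w u (l.concat b) := by rw [List.concat_eq_append, listCost_append_singleton]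

theorem spDist_eq_iInf_add {u v : V} (huv : u ≠ v) :
    spDist w u v = ⨅ x, spDist w u x + w x v :=
  le_antisymm (le_iInf fun x => spDist_le_add w u x v) (iInf_add_le_spDist w huv)

theorem exists_spDist_eq_add [Finite V] {u v : V} (huv : u ≠ v) :
    ∃ x, spDist w u v = spDist w u x + w x v := by
  have : Nonempty V := ⟨u⟩
  obtain ⟨x, hx⟩ := exists_eq_ciInf_of_finite (f := fun x => spDist w u x + w x v)
  exact ⟨x, (spDist_eq_iInf_add w huv).trans hx.symm⟩

lemma spDist_lt_of_spDist_lt_of_eq_add {c u x v : V} (hx : spDist w u v = spDist w u x + w x v)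
    (hxv : w x v ≠ ⊤) (hc : spDist w c x < spDist w u x) : spDist w c v < spDist w u v :=
  calc spDist w c v ≤ spDist w c x + w x v := spDist_le_add w c x v
    _ < spDist w u x + w x v := ENNReal.add_lt_add_right hxv hc
    _ = spDist w u v := hx.symm

end SpDist

open SpDist in
theorem stmt_12_general {V : Type*} [Fintype V]
    (w : V → V → ℝ≥0∞) (v : V) (u : V) (huv : u ≠ v) (i : ℕ)
    (hfin : spDist w u v < ⊤)
    (hu : (Finset.univ.filter fun c => spDist w c v < spDist w u v).card = i - 1) :
    ∃ x : V, w x v < ⊤ ∧ spDist w u v = spDist w u x + w x v ∧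
      (Finset.univ.filter fun c => spDist w c x < spDist w u x).card ≤ i - 1 := by
  obtain ⟨x, hx⟩ := exists_spDist_eq_add w huv
  have hxv : w x v < ⊤ := (le_add_self.trans hx.ge).trans_lt hfin
  refine ⟨x, hxv, hx, hu ▸ Finset.card_le_card ?_⟩
  exact Finset.monotone_filter_right _ fun c _ => spDist_lt_of_spDist_lt_of_eq_add w hx hxv.ne

theorem stmt_12 {V : Type*} [Fintype V] [DecidableEq V]
    (w : V → V → ℝ≥0∞) (hpos : ∀ a b, 0 < w a b)
    (v : V) (hdist : Function.Injective fun x => spDist w x v)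
    (u : V) (huv : u ≠ v) (i : ℕ) (hi : 1 ≤ i)
    (hfin : spDist w u v < ⊤)
    (hu : (Finset.univ.filter fun c => spDist w c v < spDist w u v).card = i - 1) :
    ∃ x : V, w x v < ⊤ ∧ spDist w u v = spDist w u x + w x v ∧
      (Finset.univ.filter fun c => spDist w c x < spDist w u x).card ≤ i - 1 :=
  stmt_12_general w v u huv i hfin hu
end
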